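/- arXiv:2306.07549 — 3 statements merged into one kernel-verified Lean document; each statement's English description precedes it below -/
import Mathlib

section
/- Consider one stage of the SHVar budget allocation: a finite set A of k arms with known positive reward variances σ_i² for i ∈ A, a budget of n_s rounds, and pull counts N_{t,i} = #{ℓ < t : I_ℓ = i} where at each round t ∈ {1,…,n_s} the pulled arm I_t is any arm maximizing σ_i²/N_{t,i} over i ∈ A (with the convention σ_i²/0 = +∞). Let λ_i = (σ_i² / Σ_{j∈A} σ_j²) · n_s for each i ∈ A, and suppose every λ_i is a (positive) integer. Then the final pull counts satisfy N_i = λ_i for every arm i ∈ A, where N_i = #{t ∈ {1,…,n_s} : I_t = i}. -/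
open Finset
open scoped ENNReal NNReal

/-! The integers `λ_i` are quotas summing to `n_s`, and `σ_i² / λ_i` is the same number `c` for
every arm. As long as all pull counts are within their quotas and the budget is not spent, some
arm `j` is strictly below its quota, so its ratio `σ_j² / N_{t,j}` exceeds `c`; an arm at its
quota has ratio exactly `c` and is therefore never pulled. Hence no arm ever exceeds its quota,
and after `n_s = Σ λ_i` rounds every quota is met exactly. -/

section GreedyAllocation

variable {ι : Type*}

theorem lt_quota_of_ratio_le {w : ι → ℝ≥0∞} {m n : ι → ℕ} {j k : ι} (hwj₀ : w j ≠ 0)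
    (hwj_top : w j ≠ ⊤) (hquota : w k / m k = w j / m j) (hj : n j < m j)
    (hk_le : n k ≤ m k) (hk : w j / n j ≤ w k / n k) : n k < m k := by
  refine hk_le.lt_of_ne fun hk_eq => (hk.trans_lt ?_).false
  rw [hk_eq, hquota]
  -- strict antitonicity in the denominator includes `n j = 0`, where `w j / 0 = ⊤`
  exact ENNReal.div_lt_div_left hwj₀ hwj_top (by exact_mod_cast hj)

variable [DecidableEq ι]

def pullCount (I : ℕ → ι) (t : ℕ) (i : ι) : ℕ := #{ℓ ∈ range t | I ℓ = i}

theorem pullCount_succ (I : ℕ → ι) (t : ℕ) (i : ι) :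
    pullCount I (t + 1) i = pullCount I t i + if I t = i then 1 else 0 := by
  unfold pullCount
  rw [range_add_one, filter_insert]
  split_ifs
  · exact card_insert_of_notMem (by simp)
  · rfl

variable [Fintype ι]

theorem sum_pullCount (I : ℕ → ι) (t : ℕ) : ∑ i, pullCount I t i = t := by
  simpa [pullCount] using (card_eq_sum_card_fiberwise (s := range t) (t := univ)
    fun ℓ _ => mem_univ (I ℓ)).symm

variable {w : ι → ℝ≥0∞} {m : ι → ℕ}

theorem pullCount_le_quota (hw₀ : ∀ i, w i ≠ 0) (hw_top : ∀ i, w i ≠ ⊤)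
    (hquota : ∀ i j, w i / m i = w j / m j) {I : ℕ → ι}
    (hgreedy : ∀ t < ∑ i, m i, ∀ j,
      w j / pullCount I t j ≤ w (I t) / pullCount I t (I t)) :
    ∀ t ≤ ∑ i, m i, pullCount I t ≤ m := by
  intro t
  induction t with
  | zero => intro _ i; simp [pullCount]
  | succ t ih =>
    intro ht i
    have hle := ih (by omega)
    obtain ⟨j, hj⟩ : ∃ j, pullCount I t j < m j := by
      by_contra! hge
      have hspent := sum_le_sum fun j (_ : j ∈ univ) => hge j
      rw [sum_pullCount] at hspent
      omega
    have hpulled := lt_quota_of_ratio_le (hw₀ j) (hw_top j) (hquota (I t) j) hj (hle (I t))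
      (hgreedy t ht j)
    rw [pullCount_succ]
    split_ifs with h
    · exact h ▸ hpulled
    · simpa using hle i

theorem pullCount_eq_quota (hw₀ : ∀ i, w i ≠ 0) (hw_top : ∀ i, w i ≠ ⊤)
    (hquota : ∀ i j, w i / m i = w j / m j) {I : ℕ → ι}
    (hgreedy : ∀ t < ∑ i, m i, ∀ j,
      w j / pullCount I t j ≤ w (I t) / pullCount I t (I t)) :
    pullCount I (∑ i, m i) = m := by
  have hle := pullCount_le_quota hw₀ hw_top hquota hgreedy _ le_rfl
  funext i
  exact (sum_eq_sum_iff_of_le fun i _ => hle i).mp (sum_pullCount I _) i (mem_univ i)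

end GreedyAllocation

section ProportionalQuotas

variable {ι : Type*} [Fintype ι] {v : ι → ℝ} {ns : ℕ} {m : ι → ℕ}

theorem sum_eq_of_natCast_eq_div_sum_mul (hv : ∀ i, 0 < v i) (i₀ : ι)
    (hm : ∀ i, (m i : ℝ) = v i / (∑ j, v j) * ns) : ∑ i, m i = ns := by
  have hS : (∑ j, v j) ≠ 0 := (sum_pos (fun j _ => hv j) ⟨i₀, mem_univ i₀⟩).ne'
  have : ((∑ i, m i : ℕ) : ℝ) = ns := by
    push_cast
    simp_rw [hm, ← sum_mul, ← sum_div, div_self hS, one_mul]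
  exact_mod_cast this

theorem ofReal_div_eq_of_natCast_eq_div_sum_mul (hv : ∀ i, 0 < v i) (hm_pos : ∀ i, 0 < m i)
    (hm : ∀ i, (m i : ℝ) = v i / (∑ j, v j) * ns) (i j : ι) :
    ENNReal.ofReal (v i) / m i = ENNReal.ofReal (v j) / m j := by
  have hratio : ∀ i, ENNReal.ofReal (v i) / m i = ENNReal.ofReal ((∑ j, v j) / ns) := by
    intro i
    rw [← ENNReal.ofReal_natCast, ← ENNReal.ofReal_div_of_pos (by exact_mod_cast hm_pos i), hm,
      div_mul_eq_mul_div, div_div_eq_mul_div, mul_div_mul_left _ _ (hv i).ne']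
  rw [hratio, hratio]

end ProportionalQuotas

theorem shvar_stage_allocation_exact_general
    {ι : Type*} [Fintype ι] [DecidableEq ι]
    (v : ι → ℝ) (hv : ∀ i, 0 < v i)
    (ns : ℕ) (I : ℕ → ι)
    (N : ℕ → ι → ℕ)
    (hN : ∀ t i, N t i = ((Finset.range t).filter (fun ℓ => I ℓ = i)).card)
    (hgreedy : ∀ t < ns, ∀ j : ι,
      ENNReal.ofReal (v j) / (N t j : ℝ≥0∞)
        ≤ ENNReal.ofReal (v (I t)) / (N t (I t) : ℝ≥0∞))
    (hint : ∀ i : ι, ∃ m : ℕ, 0 < m ∧ (m : ℝ) = v i / (∑ j, v j) * ns) :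
    ∀ i : ι, (N ns i : ℝ) = v i / (∑ j, v j) * ns := by
  intro i
  choose m hm_pos hm using hint
  obtain rfl : N = pullCount I := funext fun t => funext (hN t)
  obtain rfl : ∑ i, m i = ns := sum_eq_of_natCast_eq_div_sum_mul hv i hm
  have hw₀ (j : ι) : ENNReal.ofReal (v j) ≠ 0 := (ENNReal.ofReal_pos.mpr (hv j)).ne'
  rw [pullCount_eq_quota hw₀ (fun _ => ENNReal.ofReal_ne_top)
    (ofReal_div_eq_of_natCast_eq_div_sum_mul hv hm_pos hm) hgreedy, hm]

/-- One stage of the `SHVar` budget allocation: a finite type `ι` of arms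
with positive reward variances `v i = σ_i²`, a budget of `ns` rounds, pulled arms
`I 0, …, I (ns-1)`, and pull counts `N t i = #{ℓ < t : I ℓ = i}`.  In every round `t < ns`
the pulled arm maximizes `v i / N t i` over all arms (with the convention `x / 0 = ∞`,
expressed in `ℝ≥0∞`).  If every `λ_i = (v i / Σ_j v j) · ns` is a positive integer, then
the final pull count of every arm `i` equals `λ_i`. -/
theorem shvar_stage_allocation_exact
    {ι : Type*} [Fintype ι] [DecidableEq ι] [Nonempty ι]
    (v : ι → ℝ) (hv : ∀ i, 0 < v i)
    (ns : ℕ) (I : ℕ → ι)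
    (N : ℕ → ι → ℕ)
    (hN : ∀ t i, N t i = ((Finset.range t).filter (fun ℓ => I ℓ = i)).card)
    (hgreedy : ∀ t < ns, ∀ j : ι,
      ENNReal.ofReal (v j) / (N t j : ℝ≥0∞)
        ≤ ENNReal.ofReal (v (I t)) / (N t (I t) : ℝ≥0∞))
    (hint : ∀ i : ι, ∃ m : ℕ, 0 < m ∧ (m : ℝ) = v i / (∑ j, v j) * ns) :
    ∀ i : ι, (N ns i : ℝ) = v i / (∑ j, v j) * ns :=
  shvar_stage_allocation_exact_general v hv ns I N hN hgreedy hint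
end

section
/- Let X_1, …, X_{N+1} be i.i.d. samples from a Gaussian distribution N(μ, σ²) with σ > 0, let μ̂ = (1/(N+1)) Σ_{ℓ=1}^{N+1} X_ℓ be the sample mean and σ̂² = (1/N) Σ_{ℓ=1}^{N+1} (X_ℓ − μ̂)² the unbiased sample variance. Fix δ ∈ (0,1) and suppose N > 4 log(1/δ). Then with probability at least 1 − δ, σ² < σ̂² / (1 − 2 √(log(1/δ)/N)). -/
/-!
After standardising, `N σ̂² / σ²` is the sum of squared deviations `V` of `N + 1` i.i.d. standard
Gaussians `W`. Its Laplace transform `E exp (-t V) = (1 + 2t)^(-N/2)` is computed without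
diagonalising: writing `S = Σ W i`, the factor `exp (t S² / (N + 1))` is the Gaussian average
`E_g exp (a g S)` with `a² = 2t / (N + 1)`, after which the coordinates decouple and Fubini
applies. A Chernoff bound together with `log (1 + u) ≥ u - u² / 2` gives
`P (V ≤ (1 - 2t) N) ≤ exp (-t² N)`, and `t = √(log (1/δ) / N)` is the choice in the claim.
-/

open MeasureTheory ProbabilityTheory Real Finset

theorem integral_exp_neg_mul_sq_add_mul {β : ℝ} (hβ : 0 < β) (b : ℝ) :
    ∫ x, exp (-β * x ^ 2 + b * x) = √(π / β) * exp (b ^ 2 / (4 * β)) := by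
  have hsq (x : ℝ) : exp (-β * x ^ 2 + b * x) =
      exp (-β * (x - b / (2 * β)) ^ 2) * exp (b ^ 2 / (4 * β)) := by
    rw [← exp_add]
    congr 1
    field_simp
    ring
  simp_rw [hsq, integral_mul_const, integral_sub_right_eq_self (fun x => exp (-β * x ^ 2)),
    integral_gaussian]

theorem integral_exp_quadratic_gaussianReal {β : ℝ} (hβ : 0 < β) (b : ℝ) :
    ∫ x, exp ((1 - β) / 2 * x ^ 2 + b * x) ∂gaussianReal 0 1 = exp (b ^ 2 / (2 * β)) / √β := by
  have hdens (x : ℝ) : gaussianPDFReal 0 1 x • exp ((1 - β) / 2 * x ^ 2 + b * x) =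
      (√(2 * π))⁻¹ * exp (-(β / 2) * x ^ 2 + b * x) := by
    rw [gaussianPDFReal, smul_eq_mul, mul_assoc, ← exp_add]
    congr 2
    · simp
    · push_cast; ring
  simp_rw [integral_gaussianReal_eq_integral_smul one_ne_zero, hdens, integral_const_mul,
    integral_exp_neg_mul_sq_add_mul (half_pos hβ)]
  rw [div_div_eq_mul_div, sqrt_div' _ hβ.le,
    show b ^ 2 / (4 * (β / 2)) = b ^ 2 / (2 * β) by ring]
  field_simp

theorem ProbabilityTheory.iIndepFun.integral_fun_prod_comp_eq_pow {Ω ι 𝓧 : Type*}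
    [MeasurableSpace Ω] [MeasurableSpace 𝓧] [Fintype ι] {P : Measure Ω} {μ : Measure 𝓧}
    {X : ι → Ω → 𝓧}
    (hindep : iIndepFun X P) (hlaw : ∀ i, HasLaw (X i) μ P) {f : 𝓧 → ℝ}
    (hf : AEStronglyMeasurable f μ) :
    ∫ ω, ∏ i, f (X i ω) ∂P = (∫ x, f x ∂μ) ^ Fintype.card ι := by
  rw [hindep.integral_fun_prod_comp (fun i => (hlaw i).aemeasurable)
    (fun i => (hlaw i).map_eq ▸ hf), ← Finset.card_univ, ← Finset.prod_const]
  exact Finset.prod_congr rfl fun i _ => (hlaw i).integral_comp hf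

noncomputable def sumSqDev {ι : Type*} [Fintype ι] (x : ι → ℝ) : ℝ :=
  ∑ i, (x i - (∑ j, x j) / Fintype.card ι) ^ 2

section sumSqDev

variable {ι : Type*} [Fintype ι]

theorem sumSqDev_nonneg (x : ι → ℝ) : 0 ≤ sumSqDev x := by
  unfold sumSqDev; positivity

theorem sumSqDev_eq_sum_sq_sub (x : ι → ℝ) :
    sumSqDev x = ∑ i, x i ^ 2 - (∑ i, x i) ^ 2 / Fintype.card ι := by
  rcases isEmpty_or_nonempty ι with hι | hι
  · simp [sumSqDev]
  have hcard : (Fintype.card ι : ℝ) ≠ 0 := by positivity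
  simp only [sumSqDev, sub_sq, Finset.sum_add_distrib, Finset.sum_sub_distrib,
    ← Finset.sum_mul, ← Finset.mul_sum, Finset.sum_const, Finset.card_univ, nsmul_eq_mul]
  field_simp
  ring

theorem sumSqDev_const_add_mul (a b : ℝ) (x : ι → ℝ) :
    sumSqDev (fun i => a + b * x i) = b ^ 2 * sumSqDev x := by
  rcases isEmpty_or_nonempty ι with hι | hι
  · simp [sumSqDev]
  have hcard : (Fintype.card ι : ℝ) ≠ 0 := by positivity
  simp only [sumSqDev, Finset.sum_add_distrib, ← Finset.mul_sum, Finset.sum_const,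
    Finset.card_univ, nsmul_eq_mul]
  rw [Finset.mul_sum _ _ (b ^ 2)]
  congr 1 with i
  field_simp
  ring

theorem aemeasurable_sumSqDev {Ω : Type*} [MeasurableSpace Ω] {P : Measure Ω}
    {W : ι → Ω → ℝ} (hW : ∀ i, AEMeasurable (W i) P) :
    AEMeasurable (fun ω => sumSqDev (W · ω)) P := by
  unfold sumSqDev; fun_prop

end sumSqDev

theorem inv_sqrt_one_add_two_mul_le_exp {t : ℝ} (ht : 0 ≤ t) :
    (√(1 + 2 * t))⁻¹ ≤ exp (t ^ 2 - t) := by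
  have hlog : 2 * t - 2 * t ^ 2 ≤ log (1 + 2 * t) := by
    refine le_trans ?_ (le_log_one_add_of_nonneg (by positivity : 0 ≤ 2 * t))
    rw [le_div_iff₀ (by positivity)]
    nlinarith [pow_nonneg ht 3]
  rw [sqrt_eq_rpow, ← rpow_neg (by positivity), rpow_def_of_pos (by positivity), exp_le_exp]
  linarith

theorem hasLaw_sub_div_gaussianReal {Ω : Type*} [MeasurableSpace Ω] {P : Measure Ω}
    {X : Ω → ℝ} {m σ : ℝ} (hσ : σ ≠ 0) (hX : HasLaw X (gaussianReal m (σ ^ 2).toNNReal) P) :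
    HasLaw (fun ω => (X ω - m) / σ) (gaussianReal 0 1) P := by
  convert gaussianReal_div_const (gaussianReal_sub_const hX m) σ using 2
  · simp
  · ext
    simp [sq_nonneg, hσ]

theorem integrable_exp_neg_mul_sumSqDev {Ω ι : Type*} [MeasurableSpace Ω] [Fintype ι]
    {P : Measure Ω} [IsFiniteMeasure P] {W : ι → Ω → ℝ} (hW : ∀ i, AEMeasurable (W i) P)
    {t : ℝ} (ht : 0 ≤ t) :
    Integrable (fun ω => exp (-t * sumSqDev (W · ω))) P := by
  have hV := aemeasurable_sumSqDev hW
  refine (integrable_const (1 : ℝ)).mono' (AEMeasurable.aestronglyMeasurable (by fun_prop))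
    (ae_of_all _ fun ω => ?_)
  rw [Real.norm_of_nonneg (exp_nonneg _), exp_le_one_iff]
  nlinarith [sumSqDev_nonneg (W · ω)]

section sumSqDevGaussian

variable {Ω : Type*} [MeasurableSpace Ω] {P : Measure Ω} {n : ℕ} {W : Fin (n + 1) → Ω → ℝ}

theorem mgf_neg_sumSqDev (hindep : iIndepFun W P)
    (hlaw : ∀ i, HasLaw (W i) (gaussianReal 0 1) P) {t : ℝ} (ht : 0 ≤ t) :
    mgf (fun ω => sumSqDev (W · ω)) P (-t) = (√(1 + 2 * t))⁻¹ ^ n := by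
  have := hindep.isProbabilityMeasure
  set a := √(2 * t / (n + 1))
  have ha : a ^ 2 = 2 * t / (n + 1) := sq_sqrt (by positivity)
  set F : Ω → ℝ → ℝ :=
    fun ω g => ∏ i, exp ((1 - (1 + 2 * t)) / 2 * W i ω ^ 2 + a * g * W i ω)
  have hF (ω : Ω) (g : ℝ) :
      F ω g = exp (-t * ∑ i, W i ω ^ 2) * exp (a * (∑ i, W i ω) * g) := by
    simp only [F, ← exp_sum, ← exp_add, Finset.sum_add_distrib, ← Finset.mul_sum]
    ring_nf
  have hsection (ω : Ω) : ∫ g, F ω g ∂gaussianReal 0 1 = exp (-t * sumSqDev (W · ω)) := by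
    have hmgf := congrFun (mgf_id_gaussianReal (μ := 0) (v := 1)) (a * ∑ i, W i ω)
    simp only [mgf, id] at hmgf
    simp_rw [hF, integral_const_mul, hmgf, ← exp_add, sumSqDev_eq_sum_sq_sub, mul_pow, ha,
      Fintype.card_fin]
    congr 1
    push_cast
    field_simp
    ring
  have hfiber (g : ℝ) : ∫ ω, F ω g ∂P =
      exp ((1 - (1 + 2 * t)⁻¹) / 2 * g ^ 2 + 0 * g) * (√(1 + 2 * t))⁻¹ ^ (n + 1) := by
    rw [hindep.integral_fun_prod_comp_eq_pow hlaw
        (f := fun w => exp ((1 - (1 + 2 * t)) / 2 * w ^ 2 + a * g * w)) (by fun_prop),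
      integral_exp_quadratic_gaussianReal (by positivity), Fintype.card_fin, div_pow,
      ← exp_nat_mul, div_eq_mul_inv, inv_pow]
    congr 2
    push_cast
    rw [mul_pow, ha]
    field_simp
    ring
  have hint : Integrable (Function.uncurry F) (P.prod (gaussianReal 0 1)) := by
    have hW (i : Fin (n + 1)) :
        AEMeasurable (fun p : Ω × ℝ => W i p.1) (P.prod (gaussianReal 0 1)) :=
      (hlaw i).aemeasurable.comp_fst
    rw [integrable_prod_iff (AEMeasurable.aestronglyMeasurable (by
      simp only [F, Function.uncurry_def]; fun_prop))]
    refine ⟨ae_of_all _ fun ω => ?_, ?_⟩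
    · simp_rw [Function.uncurry_apply_pair, hF]
      exact (integrable_exp_mul_gaussianReal _).const_mul _
    · simp_rw [Function.uncurry_apply_pair, Real.norm_of_nonneg (by positivity : 0 ≤ F _ _),
        hsection]
      exact integrable_exp_neg_mul_sumSqDev (fun i => (hlaw i).aemeasurable) ht
  calc mgf (fun ω => sumSqDev (W · ω)) P (-t) = ∫ ω, ∫ g, F ω g ∂gaussianReal 0 1 ∂P := by
        simp only [mgf, hsection]
    _ = ∫ g, ∫ ω, F ω g ∂P ∂gaussianReal 0 1 := integral_integral_swap hint
    _ = (√(1 + 2 * t))⁻¹ ^ n := by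
        simp_rw [hfiber, integral_mul_const,
          integral_exp_quadratic_gaussianReal (inv_pos.2 (by positivity : (0 : ℝ) < 1 + 2 * t))]
        have hs : √(1 + 2 * t) ≠ 0 := by positivity
        rw [zero_pow two_ne_zero, zero_div, exp_zero, sqrt_inv, pow_succ]
        field_simp

theorem measureReal_sumSqDev_le_le (hindep : iIndepFun W P)
    (hlaw : ∀ i, HasLaw (W i) (gaussianReal 0 1) P) {t : ℝ} (ht : 0 ≤ t) :
    P.real {ω | sumSqDev (W · ω) ≤ (1 - 2 * t) * n} ≤ exp (-(t ^ 2 * n)) := by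
  have := hindep.isProbabilityMeasure
  calc P.real {ω | sumSqDev (W · ω) ≤ (1 - 2 * t) * n}
      ≤ exp (-(-t) * ((1 - 2 * t) * n)) * mgf (fun ω => sumSqDev (W · ω)) P (-t) :=
        measure_le_le_exp_mul_mgf _ (by linarith)
          (integrable_exp_neg_mul_sumSqDev (fun i => (hlaw i).aemeasurable) ht)
    _ ≤ exp (t * (1 - 2 * t) * n) * exp (t ^ 2 - t) ^ n := by
        rw [mgf_neg_sumSqDev hindep hlaw ht, neg_neg, ← mul_assoc]
        gcongr
        exact inv_sqrt_one_add_two_mul_le_exp ht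
    _ = exp (-(t ^ 2 * n)) := by
        rw [← exp_nat_mul, ← exp_add]
        ring_nf

theorem ofReal_one_sub_exp_le_measure_lt_sumSqDev (hindep : iIndepFun W P)
    (hlaw : ∀ i, HasLaw (W i) (gaussianReal 0 1) P) {t : ℝ} (ht : 0 ≤ t) :
    ENNReal.ofReal (1 - exp (-(t ^ 2 * n))) ≤ P {ω | (1 - 2 * t) * n < sumSqDev (W · ω)} := by
  have := hindep.isProbabilityMeasure
  have hcompl : {ω | (1 - 2 * t) * n < sumSqDev (W · ω)} =
      {ω | sumSqDev (W · ω) ≤ (1 - 2 * t) * n}ᶜ := by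
    ext
    simp
  rw [hcompl, ← ofReal_measureReal, probReal_compl_eq_one_sub₀ (nullMeasurableSet_le
    (aemeasurable_sumSqDev fun i => (hlaw i).aemeasurable) aemeasurable_const)]
  exact ENNReal.ofReal_le_ofReal (by linarith [measureReal_sumSqDev_le_le hindep hlaw ht])

end sumSqDevGaussian

/-- Let `X 0, …, X N` be `N + 1` i.i.d. samples from a Gaussian
distribution `N(m, σ²)` with `σ > 0`, let `μ̂` be the sample mean and
`σ̂² = (1/N) Σ_ℓ (X ℓ − μ̂)²` the unbiased sample variance.  Fix `δ ∈ (0,1)` and suppose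
`N > 4 log(1/δ)`.  Then with probability at least `1 − δ`,
`σ² < σ̂² / (1 − 2 √(log(1/δ)/N))`. -/
theorem gaussian_variance_ucb
    {Ω : Type*} [MeasurableSpace Ω] (P : Measure Ω) [IsProbabilityMeasure P]
    (N : ℕ) (m σ : ℝ) (hσ : 0 < σ)
    (X : Fin (N + 1) → Ω → ℝ) (hXmeas : ∀ ℓ, Measurable (X ℓ))
    (hindep : iIndepFun X P)
    (hgauss : ∀ ℓ, Measure.map (X ℓ) P = gaussianReal m (σ ^ 2).toNNReal)
    (muhat : Ω → ℝ) (hmuhat : ∀ ω, muhat ω = (∑ ℓ, X ℓ ω) / (N + 1))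
    (vhat : Ω → ℝ) (hvhat : ∀ ω, vhat ω = (∑ ℓ, (X ℓ ω - muhat ω) ^ 2) / N)
    (δ : ℝ) (hδ : δ ∈ Set.Ioo (0 : ℝ) 1)
    (hN : 4 * Real.log (1 / δ) < (N : ℝ)) :
    ENNReal.ofReal (1 - δ)
      ≤ P {ω | σ ^ 2 < vhat ω / (1 - 2 * Real.sqrt (Real.log (1 / δ) / N))} := by
  obtain ⟨hδ0, hδ1⟩ := hδ
  have hlog : 0 < log (1 / δ) := log_pos (one_lt_one_div hδ0 hδ1)
  have hNpos : (0 : ℝ) < N := by linarith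
  set t := √(log (1 / δ) / N)
  have ht : t ^ 2 * N = log (1 / δ) := by
    rw [sq_sqrt (by positivity), div_mul_cancel₀ _ hNpos.ne']
  have ht_half : 0 < 1 - 2 * t := by
    have : t ^ 2 < (1 / 2) ^ 2 := by nlinarith
    nlinarith [sqrt_nonneg (log (1 / δ) / N)]
  set W : Fin (N + 1) → Ω → ℝ := fun i ω => (X i ω - m) / σ
  have hvhat_eq (ω : Ω) : vhat ω = σ ^ 2 * sumSqDev (W · ω) / N := by
    have hX : (X · ω) = fun i => m + σ * W i ω :=
      funext fun i => by simp [W, mul_div_cancel₀ _ hσ.ne']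
    rw [hvhat, ← sumSqDev_const_add_mul, ← hX, sumSqDev, Fintype.card_fin, hmuhat]
    push_cast
    rfl
  calc ENNReal.ofReal (1 - δ) = ENNReal.ofReal (1 - exp (-(t ^ 2 * N))) := by
        rw [ht, one_div, log_inv, neg_neg, exp_log hδ0]
    _ ≤ P {ω | (1 - 2 * t) * N < sumSqDev (W · ω)} :=
        ofReal_one_sub_exp_le_measure_lt_sumSqDev
          (hindep.comp (fun _ y => (y - m) / σ) fun _ => by fun_prop)
          (fun i => hasLaw_sub_div_gaussianReal hσ.ne' ⟨(hXmeas i).aemeasurable, hgauss i⟩)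
          (sqrt_nonneg _)
    _ ≤ P {ω | σ ^ 2 < vhat ω / (1 - 2 * t)} := by
        refine measure_mono fun ω hω => ?_
        rw [Set.mem_ofPred_eq, hvhat_eq, lt_div_iff₀ ht_half, lt_div_iff₀ hNpos]
        nlinarith [sq_pos_of_pos hσ, hω.out]
end

section
/- Fix a stage s of sequential halving with surviving arm set A_s containing the best arm 1, where arm means satisfy μ_1 > μ_i for a suboptimal arm i ∈ A_s, all rewards are Gaussian with variances σ_j² > 0, the per-stage budget is n_s, and each arm j ∈ A_s is pulled exactly N_{s,j} = (σ_j² / Σ_{k∈A_s} σ_k²) · n_s times (assumed a positive integer). Let μ̂_{s,j} be the empirical mean of the N_{s,j} i.i.d. N(μ_j, σ_j²) observations of arm j, with all observations independent. Then P(μ̂_{s,i} ≥ μ̂_{s,1}) ≤ exp( − n_s Δ_i² / (4 Σ_{j∈A_s} σ_j²) ), where Δ_i = μ_1 − μ_i. -/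
/-!
The centred empirical mean of arm `j` averages `N_j` independent `N(0, σ_j²)` variables, so it
is sub-Gaussian with variance proxy `σ_j² / N_j`; the variance-proportional allocation makes this
equal to `Σ σ² / n_s` for every arm. The means of distinct arms use disjoint blocks of
observations, hence are independent, and their centred difference is sub-Gaussian with proxy
`2 Σ σ² / n_s`. The event `μ̂_i ≥ μ̂_1` says this difference is at least `Δ_i`, and the Chernoff
bound gives `exp (-Δ_i² / (2 · 2 Σ σ² / n_s))`.
-/

open MeasureTheory ProbabilityTheory Real Finset
open scoped NNReal

namespace ProbabilityTheory

variable {Ω : Type*} [MeasurableSpace Ω] {P : Measure Ω}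

lemma hasSubgaussianMGF_id_gaussianReal_zero (v : ℝ≥0) :
    HasSubgaussianMGF id v (gaussianReal 0 v) where
  integrable_exp_mul t := integrable_exp_mul_gaussianReal t
  mgf_le t := by simp [mgf_id_gaussianReal]

lemma hasSubgaussianMGF_sub_of_map_eq_gaussianReal {X : Ω → ℝ} (hX : Measurable X) {m : ℝ}
    {v : ℝ≥0} (hlaw : P.map X = gaussianReal m v) :
    HasSubgaussianMGF (fun ω ↦ X ω - m) v P := by
  rw [← HasSubgaussianMGF.id_map_iff (by fun_prop)]
  rw [(gaussianReal_sub_const ⟨hX.aemeasurable, hlaw⟩ m).map_eq, sub_self]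
  exact hasSubgaussianMGF_id_gaussianReal_zero v

lemma hasSubgaussianMGF_sum_range_div_sub {X : ℕ → Ω → ℝ} (hmeas : ∀ ℓ, Measurable (X ℓ))
    (hindep : iIndepFun X P) {m : ℝ} {v : ℝ≥0} (hlaw : ∀ ℓ, P.map (X ℓ) = gaussianReal m v)
    {N : ℕ} (hN : N ≠ 0) :
    HasSubgaussianMGF (fun ω ↦ (∑ ℓ ∈ range N, X ℓ ω) / N - m) (v / N) P := by
  have hterm : ∀ ℓ ∈ range N, HasSubgaussianMGF (fun ω ↦ (N : ℝ)⁻¹ * (X ℓ ω - m))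
      (⟨(N : ℝ)⁻¹ ^ 2, sq_nonneg _⟩ * v) P := fun ℓ _ ↦
    (hasSubgaussianMGF_sub_of_map_eq_gaussianReal (hmeas ℓ) (hlaw ℓ)).const_mul _
  have hsum := HasSubgaussianMGF.sum_of_iIndepFun
    (hindep.comp (fun _ x ↦ (N : ℝ)⁻¹ * (x - m)) fun _ ↦ by fun_prop) hterm
  have hN' : (N : ℝ) ≠ 0 := Nat.cast_ne_zero.mpr hN
  convert hsum using 1
  · ext ω
    simp only [Function.comp_apply]
    rw [← mul_sum, sum_sub_distrib, sum_const, card_range, nsmul_eq_mul]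
    field_simp
  · rw [sum_const, card_range, nsmul_eq_mul]
    ext
    rw [NNReal.coe_div, NNReal.coe_mul, NNReal.coe_natCast]
    change (v : ℝ) / N = N * ((N : ℝ)⁻¹ ^ 2 * v)
    field_simp

lemma iIndepFun.indepFun_finsetSum_finsetSum {κ : Type*} {Y : κ → Ω → ℝ}
    (hmeas : ∀ k, Measurable (Y k)) (hindep : iIndepFun Y P) {S T : Finset κ}
    (hST : Disjoint S T) :
    IndepFun (fun ω ↦ ∑ k ∈ S, Y k ω) (fun ω ↦ ∑ k ∈ T, Y k ω) P := by
  have := (hindep.indepFun_finset S T hST hmeas).comp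
    (φ := fun x ↦ ∑ k, x k) (ψ := fun x ↦ ∑ k, x k) (by fun_prop) (by fun_prop)
  convert this using 2 <;> exact (sum_coe_sort _ _).symm

lemma iIndepFun.indepFun_sum_range_sum_range {ι : Type*} {Y : ι × ℕ → Ω → ℝ}
    (hmeas : ∀ p, Measurable (Y p)) (hindep : iIndepFun Y P) {i j : ι} (hij : i ≠ j)
    (N M : ℕ) :
    IndepFun (fun ω ↦ ∑ ℓ ∈ range N, Y (i, ℓ) ω) (fun ω ↦ ∑ ℓ ∈ range M, Y (j, ℓ) ω) P := by
  have hdisj : Disjoint ((range N).map (.sectR i ℕ)) ((range M).map (.sectR j ℕ)) := by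
    simp only [disjoint_left, mem_map, Function.Embedding.sectR_apply]
    rintro _ ⟨a, -, rfl⟩ ⟨b, -, h⟩
    exact hij (congrArg Prod.fst h).symm
  simpa only [sum_map, Function.Embedding.sectR_apply] using
    hindep.indepFun_finsetSum_finsetSum hmeas hdisj

end ProbabilityTheory

theorem shvar_stage_comparison_error_bound_general
    {Ω : Type*} [MeasurableSpace Ω] (P : Measure Ω) [IsProbabilityMeasure P]
    {ι : Type*} (A : Finset ι)
    (μ v : ι → ℝ) (hv : ∀ j ∈ A, 0 < v j)
    (i₀ : ι) (hi₀ : i₀ ∈ A) (i : ι) (hi : i ∈ A) (hgap : μ i < μ i₀)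
    (ns : ℕ)
    (Nn : ι → ℕ)
    (hNn : ∀ j ∈ A, 0 < Nn j ∧ (Nn j : ℝ) = v j / (∑ k ∈ A, v k) * ns)
    (Y : ι × ℕ → Ω → ℝ) (hYmeas : ∀ p, Measurable (Y p))
    (hindep : iIndepFun Y P)
    (hgauss : ∀ j ∈ A, ∀ ℓ : ℕ, Measure.map (Y (j, ℓ)) P = gaussianReal (μ j) (v j).toNNReal)
    (muhat : ι → Ω → ℝ)
    (hmuhat : ∀ j ∈ A, ∀ ω, muhat j ω = (∑ ℓ ∈ Finset.range (Nn j), Y (j, ℓ) ω) / Nn j) :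
    P {ω | muhat i₀ ω ≤ muhat i ω}
      ≤ ENNReal.ofReal
          (Real.exp (-(ns * (μ i₀ - μ i) ^ 2) / (4 * ∑ j ∈ A, v j))) := by
  set S := ∑ k ∈ A, v k
  have hS : 0 < S := sum_pos hv ⟨i₀, hi₀⟩
  have hNn_ne (j) (hj : j ∈ A) : Nn j ≠ 0 := (hNn j hj).1.ne'
  have hns : (ns : ℝ) ≠ 0 := by
    intro h
    have h₀ := (hNn i₀ hi₀).2
    rw [h, mul_zero, Nat.cast_eq_zero] at h₀
    exact hNn_ne i₀ hi₀ h₀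
  have hratio (j) (hj : j ∈ A) : v j / Nn j = S / ns := by
    rw [(hNn j hj).2]
    field_simp [(hv j hj).ne']
  have hmean (j) (hj : j ∈ A) :
      HasSubgaussianMGF (fun ω ↦ muhat j ω - μ j) ((v j).toNNReal / Nn j) P := by
    simp_rw [hmuhat j hj]
    exact hasSubgaussianMGF_sum_range_div_sub (fun _ ↦ hYmeas _)
      (hindep.precomp (Prod.mk_right_injective j)) (hgauss j hj) (hNn_ne j hj)
  have hindep_means : IndepFun (fun ω ↦ muhat i ω - μ i) (fun ω ↦ muhat i₀ ω - μ i₀) P := by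
    simp_rw [hmuhat i hi, hmuhat i₀ hi₀]
    exact (hindep.indepFun_sum_range_sum_range hYmeas (fun h ↦ hgap.ne (congrArg μ h)) _ _).comp
      (φ := fun x ↦ x / Nn i - μ i) (ψ := fun x ↦ x / Nn i₀ - μ i₀) (by fun_prop) (by fun_prop)
  have htail := ((hmean i hi).sub_of_indepFun (hmean i₀ hi₀) hindep_means).measure_ge_le
    (sub_pos.2 hgap).le
  have hevent : {ω | muhat i₀ ω ≤ muhat i ω}
      = {ω | μ i₀ - μ i ≤ (muhat i ω - μ i) - (muhat i₀ ω - μ i₀)} := by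
    ext ω
    simp only [Set.mem_ofPred_eq]
    constructor <;> intro h <;> linarith
  rw [hevent, ← ofReal_measureReal]
  refine ENNReal.ofReal_le_ofReal (htail.trans_eq ?_)
  push_cast
  rw [Real.coe_toNNReal _ (hv i hi).le, Real.coe_toNNReal _ (hv i₀ hi₀).le, hratio i hi,
    hratio i₀ hi₀]
  congr 1
  field_simp
  ring

/-- Fix a stage of sequential halving with surviving arm set `A`
containing the best arm `i₀`, and a suboptimal arm `i ∈ A` with `μ i < μ i₀`.  All rewards
are Gaussian: the observations `Y (j, ℓ)` are jointly independent with
`Y (j, ℓ) ∼ N(μ j, v j)` where `v j = σ_j² > 0`.  Each arm `j ∈ A` is pulled exactly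
`Nn j = (v j / Σ_{k∈A} v k) · ns` times (a positive integer), and `μ̂ j` is the empirical
mean of its `Nn j` observations.  Then
`P(μ̂ i ≥ μ̂ i₀) ≤ exp(− ns Δ_i² / (4 Σ_{j∈A} v j))` with `Δ_i = μ i₀ − μ i`. -/
theorem shvar_stage_comparison_error_bound
    {Ω : Type*} [MeasurableSpace Ω] (P : Measure Ω) [IsProbabilityMeasure P]
    {ι : Type*} [DecidableEq ι] (A : Finset ι)
    (μ v : ι → ℝ) (hv : ∀ j ∈ A, 0 < v j)
    (i₀ : ι) (hi₀ : i₀ ∈ A) (i : ι) (hi : i ∈ A) (hgap : μ i < μ i₀)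
    (ns : ℕ)
    (Nn : ι → ℕ)
    (hNn : ∀ j ∈ A, 0 < Nn j ∧ (Nn j : ℝ) = v j / (∑ k ∈ A, v k) * ns)
    (Y : ι × ℕ → Ω → ℝ) (hYmeas : ∀ p, Measurable (Y p))
    (hindep : iIndepFun Y P)
    (hgauss : ∀ j ∈ A, ∀ ℓ : ℕ, Measure.map (Y (j, ℓ)) P = gaussianReal (μ j) (v j).toNNReal)
    (muhat : ι → Ω → ℝ)
    (hmuhat : ∀ j ∈ A, ∀ ω, muhat j ω = (∑ ℓ ∈ Finset.range (Nn j), Y (j, ℓ) ω) / Nn j) :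
    P {ω | muhat i₀ ω ≤ muhat i ω}
      ≤ ENNReal.ofReal
          (Real.exp (-(ns * (μ i₀ - μ i) ^ 2) / (4 * ∑ j ∈ A, v j))) :=
  shvar_stage_comparison_error_bound_general P A μ v hv i₀ hi₀ i hi hgap ns Nn hNn Y hYmeas hindep
    hgauss muhat hmuhat
end
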